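/- Let a, b > 1 with log(a)/log(b) = p/q rational, h_n = a^{−n}, k_n = b^{−n}. If f(0) = 0, f(h_n)/h_n → R and f(−k_n)/(−k_n) → L with R, L real, then R and L are the only possible accumulation points of the set of sequential cord derivatives of f at 0; in particular, the set of limits of (f(h_{i_n}) − f(−k_{j_n}))/(h_{i_n} + k_{j_n}) over all subsequences is contained in {rR + (1−r)L : r ∈ F} where F = {1/(1 + b^{t/q}) : t ∈ ℤ} ∪ {0, 1}. -/

import Mathlib

/-!
Write `h = a⁻ⁱ`, `k = b⁻ʲ`. The cord quotient `(f h - f (-k)) / (h + k)` is the convex combination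
`w · (f h / h) + (1 - w) · (f (-k) / (-k))` with weight `w = h / (h + k) = 1 / (1 + aⁱ / bʲ)`, and
the rationality of `log a / log b` makes `aⁱ / bʲ = b ^ ((i p - j q) / q)` with `i p - j q ∈ ℤ`.
Along a subsequence the integer exponent is either constant or tends to `±∞`, so the weight
converges to `1 / (1 + b ^ (t / q))`, to `0` or to `1`, and the cord quotient to the corresponding
combination of `R` and `L`.
-/

open Filter Topology

lemma div_add_eq_convex_comb {K : Type*} [Field K] (X Y h k : K) (hh : h ≠ 0) (hk : k ≠ 0)
    (hhk : h + k ≠ 0) :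
    (X - Y) / (h + k) = h / (h + k) * (X / h) + (1 - h / (h + k)) * (Y / -k) := by
  field_simp
  ring

lemma one_div_div_one_div_add_one_div {A B : ℝ} (hA : 0 < A) (hB : 0 < B) :
    1 / A / (1 / A + 1 / B) = 1 / (1 + A / B) := by
  field_simp

lemma pow_div_pow_eq_rpow_of_log_div_log {a b : ℝ} (ha : 0 < a) (hb : 0 < b) (hb1 : b ≠ 1)
    {p q : ℤ} (hq : q ≠ 0) (hrat : Real.log a / Real.log b = p / q) (m n : ℕ) :
    a ^ m / b ^ n = b ^ (((m * p - n * q : ℤ) : ℝ) / q) := by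
  have hlog : Real.log b ≠ 0 := Real.log_ne_zero_of_pos_of_ne_one hb hb1
  have hab : a = b ^ ((p : ℝ) / q) := by
    rw [Real.rpow_def_of_pos hb, ← hrat, mul_div_cancel₀ _ hlog, Real.exp_log ha]
  have hexp : ((m * p - n * q : ℤ) : ℝ) / q = m * ((p : ℝ) / q) - n := by
    push_cast
    field_simp
  rw [hexp, Real.rpow_sub hb, Real.rpow_natCast, hab, ← Real.rpow_natCast, ← Real.rpow_mul hb.le,
    mul_comm]

lemma Filter.Tendsto.eq_of_convex_comb_subseq {R L M r : ℝ} {u v w : ℕ → ℝ}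
    (hu : Tendsto u atTop (𝓝 R)) (hv : Tendsto v atTop (𝓝 L))
    (hM : Tendsto (fun n => w n * u n + (1 - w n) * v n) atTop (𝓝 M))
    {φ : ℕ → ℕ} (hφ : StrictMono φ) (hw : Tendsto (w ∘ φ) atTop (𝓝 r)) :
    M = r * R + (1 - r) * L := by
  have hφ' := hφ.tendsto_atTop
  refine tendsto_nhds_unique (hM.comp hφ') ?_
  exact (hw.mul (hu.comp hφ')).add ((tendsto_const_nhds.sub hw).mul (hv.comp hφ'))

lemma Int.exists_subseq_const_or_tendsto_atTop_or_atBot (t : ℕ → ℤ) :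
    ∃ φ : ℕ → ℕ, StrictMono φ ∧
      ((∃ s, ∀ n, t (φ n) = s) ∨ Tendsto (t ∘ φ) atTop atTop ∨ Tendsto (t ∘ φ) atTop atBot) := by
  by_cases hconst : ∃ s, ∃ᶠ n in atTop, t n = s
  · obtain ⟨s, hs⟩ := hconst
    obtain ⟨φ, hφ, hφs⟩ := extraction_of_frequently_atTop hs
    exact ⟨φ, hφ, Or.inl ⟨s, hφs⟩⟩
  simp only [not_exists, not_frequently] at hconst
  have hcof : Tendsto t atTop cofinite := fun S hS => by
    show ∀ᶠ n in atTop, t n ∈ S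
    filter_upwards [(eventually_all_finite (mem_cofinite.1 hS)).2 fun s _ => hconst s] with n hn
    by_contra hnS
    exact hn (t n) hnS rfl
  have hsign : ∃ᶠ n in atTop, 0 ≤ t n ∨ t n < 0 := Frequently.of_forall fun n => le_or_gt 0 (t n)
  rcases frequently_or_distrib.1 hsign with hpos | hneg
  · obtain ⟨φ, hφ, hφt⟩ := extraction_of_frequently_atTop hpos
    refine ⟨φ, hφ, Or.inr (Or.inl (tendsto_atTop.2 fun C => ?_))⟩
    filter_upwards [hcof.comp hφ.tendsto_atTop (Set.finite_Ico 0 C).compl_mem_cofinite] with n hn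
    by_contra hlt
    exact hn ⟨hφt n, not_le.1 hlt⟩
  · obtain ⟨φ, hφ, hφt⟩ := extraction_of_frequently_atTop hneg
    refine ⟨φ, hφ, Or.inr (Or.inr (tendsto_atBot.2 fun C => ?_))⟩
    filter_upwards [hcof.comp hφ.tendsto_atTop (Set.finite_Ioc C 0).compl_mem_cofinite] with n hn
    by_contra hlt
    exact hn ⟨not_le.1 hlt, (hφt n).le⟩

noncomputable def cordWeight (b : ℝ) (q t : ℤ) : ℝ := 1 / (1 + b ^ ((t : ℝ) / q))

lemma tendsto_one_div_one_add_rpow_of_tendsto_atTop {b : ℝ} (hb : 1 < b)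
    {α : Type*} {l : Filter α} {e : α → ℝ} (he : Tendsto e l atTop) :
    Tendsto (fun x => 1 / (1 + b ^ e x)) l (𝓝 0) := by
  have hpow := (tendsto_rpow_atTop_of_base_gt_one b hb).comp he
  exact tendsto_const_nhds.div_atTop (tendsto_atTop_add_const_left _ 1 hpow)

lemma tendsto_one_div_one_add_rpow_of_tendsto_atBot {b : ℝ} (hb : 1 < b)
    {α : Type*} {l : Filter α} {e : α → ℝ} (he : Tendsto e l atBot) :
    Tendsto (fun x => 1 / (1 + b ^ e x)) l (𝓝 1) := by
  have hpow := (tendsto_rpow_atBot_of_base_gt_one b hb).comp he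
  simpa using ((tendsto_const_nhds (x := (1 : ℝ))).add hpow).inv₀ (by norm_num)

lemma exists_subseq_tendsto_cordWeight {b : ℝ} (hb : 1 < b) {q : ℤ} (hq : q ≠ 0) (t : ℕ → ℤ) :
    ∃ φ : ℕ → ℕ, StrictMono φ ∧ ∃ r, ((∃ s : ℤ, r = cordWeight b q s) ∨ r = 0 ∨ r = 1) ∧
      Tendsto (cordWeight b q ∘ t ∘ φ) atTop (𝓝 r) := by
  obtain ⟨φ, hφ, ⟨s, hs⟩ | ht⟩ := Int.exists_subseq_const_or_tendsto_atTop_or_atBot t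
  · refine ⟨φ, hφ, _, Or.inl ⟨s, rfl⟩, ?_⟩
    simp only [Function.comp_def, hs]
    exact tendsto_const_nhds
  suffices Tendsto (fun n => (t (φ n) : ℝ) / q) atTop atTop ∨
      Tendsto (fun n => (t (φ n) : ℝ) / q) atTop atBot by
    rcases this with he | he
    · exact ⟨φ, hφ, 0, Or.inr (Or.inl rfl), tendsto_one_div_one_add_rpow_of_tendsto_atTop hb he⟩
    · exact ⟨φ, hφ, 1, Or.inr (Or.inr rfl), tendsto_one_div_one_add_rpow_of_tendsto_atBot hb he⟩
  rcases ht with ht | ht <;> rcases hq.lt_or_gt with hq | hq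
  · exact .inr ((tendsto_div_const_atBot_of_neg (by exact_mod_cast hq)).2
      (tendsto_intCast_atTop_iff.2 ht))
  · exact .inl ((tendsto_intCast_atTop_iff.2 ht).atTop_div_const (by exact_mod_cast hq))
  · exact .inl ((tendsto_div_const_atTop_of_neg (by exact_mod_cast hq)).2
      (tendsto_intCast_atBot_iff.2 ht))
  · exact .inr ((tendsto_intCast_atBot_iff.2 ht).atBot_div_const (by exact_mod_cast hq))

theorem exp_decay_rational_cord_derivs_discrete_general (a b : ℝ) (ha : 1 < a) (hb : 1 < b)
    (p q : ℤ) (hq : q ≠ 0) (hrat : Real.log a / Real.log b = (p : ℝ) / (q : ℝ))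
    (f : ℝ → ℝ) (R L : ℝ)
    (hR : Tendsto (fun n : ℕ => f (1 / a ^ n) / (1 / a ^ n)) atTop (𝓝 R))
    (hL : Tendsto (fun n : ℕ => f (-(1 / b ^ n)) / (-(1 / b ^ n))) atTop (𝓝 L))
    (M : ℝ) (i j : ℕ → ℕ) (hi : StrictMono i) (hj : StrictMono j)
    (hM : Tendsto (fun n => (f (1 / a ^ i n) - f (-(1 / b ^ j n))) / (1 / a ^ i n + 1 / b ^ j n))
      atTop (𝓝 M)) :
    ∃ r : ℝ, ((∃ t : ℤ, r = 1 / (1 + b ^ ((t : ℝ) / (q : ℝ)))) ∨ r = 0 ∨ r = 1) ∧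
      M = r * R + (1 - r) * L := by
  set t : ℕ → ℤ := fun n => i n * p - j n * q
  have hweight (n : ℕ) :
      1 / a ^ i n / (1 / a ^ i n + 1 / b ^ j n) = cordWeight b q (t n) := by
    rw [one_div_div_one_div_add_one_div (by positivity) (by positivity),
      pow_div_pow_eq_rpow_of_log_div_log (by positivity) (by positivity) hb.ne' hq hrat]
    rfl
  have hconvex : Tendsto (fun n => cordWeight b q (t n) * (f (1 / a ^ i n) / (1 / a ^ i n)) +
      (1 - cordWeight b q (t n)) * (f (-(1 / b ^ j n)) / -(1 / b ^ j n))) atTop (𝓝 M) := by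
    refine hM.congr fun n => ?_
    rw [← hweight, div_add_eq_convex_comb _ _ _ _ (by positivity) (by positivity) (by positivity)]
  obtain ⟨φ, hφ, r, hr, hrlim⟩ := exists_subseq_tendsto_cordWeight hb hq t
  exact ⟨r, hr, (hR.comp hi.tendsto_atTop).eq_of_convex_comb_subseq
    (hL.comp hj.tendsto_atTop) hconvex hφ hrlim⟩

theorem exp_decay_rational_cord_derivs_discrete (a b : ℝ) (ha : 1 < a) (hb : 1 < b)
    (p q : ℤ) (hq : q ≠ 0) (hrat : Real.log a / Real.log b = (p : ℝ) / (q : ℝ))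
    (f : ℝ → ℝ) (R L : ℝ) (hf0 : f 0 = 0)
    (hR : Tendsto (fun n : ℕ => f (1 / a ^ n) / (1 / a ^ n)) atTop (𝓝 R))
    (hL : Tendsto (fun n : ℕ => f (-(1 / b ^ n)) / (-(1 / b ^ n))) atTop (𝓝 L))
    (M : ℝ) (i j : ℕ → ℕ) (hi : StrictMono i) (hj : StrictMono j)
    (hM : Tendsto (fun n => (f (1 / a ^ i n) - f (-(1 / b ^ j n))) / (1 / a ^ i n + 1 / b ^ j n))
      atTop (𝓝 M)) :
    ∃ r : ℝ, ((∃ t : ℤ, r = 1 / (1 + b ^ ((t : ℝ) / (q : ℝ)))) ∨ r = 0 ∨ r = 1) ∧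
      M = r * R + (1 - r) * L :=
  exp_decay_rational_cord_derivs_discrete_general a b ha hb p q hq hrat f R L hR hL M i j hi hj hM
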